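/- In the presented group P₆ = ⟨x, y | x⁶, y³, (xy)²⟩, the elements t₁ = y x⁻² and t₂ = y⁻¹ x² commute, the subgroup they generate is a normal subgroup of P₆, and this subgroup is isomorphic to ℤ × ℤ (free abelian of rank 2). -/

import Mathlib

/-- Relators of `P₆ = ⟨x, y | x⁶, y³, (xy)²⟩`, the fundamental group of `S²(2,3,6)`. -/
def relsP6 : Set (FreeGroup (Fin 2)) :=
  {(FreeGroup.of 0) ^ 6, (FreeGroup.of 1) ^ 3, (FreeGroup.of 0 * FreeGroup.of 1) ^ 2}

/-- `P₆ = ⟨x, y | x⁶, y³, (xy)²⟩`. -/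
abbrev P6 : Type := PresentedGroup relsP6

/-- The generator `x` of `P₆`. -/
def P6x : P6 := PresentedGroup.of 0

/-- The generator `y` of `P₆`. -/
def P6y : P6 := PresentedGroup.of 1

/-- The translation `t₁ = y x⁻²` of `P₆`. -/
def P6t1 : P6 := P6y * (P6x * P6x)⁻¹

/-- The translation `t₂ = y⁻¹ x²` of `P₆`. -/
def P6t2 : P6 := P6y⁻¹ * (P6x * P6x)

/-!
Conjugation by `x` acts on `t₁, t₂` as the rotation by 60° of the hexagonal lattice:
`x t₁ x⁻¹ = t₂` and `x t₂ x⁻¹ = t₂ t₁⁻¹`, while the half-turn `x³` inverts `t₁`. Computing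
`x³ t₁ x⁻³` both ways gives `t₂ t₁⁻¹ t₂⁻¹ = t₁⁻¹`, so `t₁` and `t₂` commute. As `y = t₁ x²`,
normality only needs the action of `x`. Finally `P₆` acts on ℤ² by affine maps, with `t₁` and
`t₂` acting as the unit translations, so `(m, n) ↦ t₁ᵐ t₂ⁿ` is injective.
-/

theorem Subgroup.mem_normalizer_closure_of_conj_mem {G : Type*} [Group G] {s : Set G} {g : G}
    (h : ∀ a ∈ s, MulAut.conj g a ∈ closure s)
    (h' : ∀ a ∈ s, MulAut.conj g⁻¹ a ∈ closure s) :
    g ∈ normalizer (closure s : Set G) := by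
  rw [mem_normalizer_iff_map_conj_eq]
  refine le_antisymm ?_ ?_
  · rw [MonoidHom.map_closure, closure_le]
    rintro _ ⟨a, ha, rfl⟩
    exact h a ha
  · rw [closure_le]
    exact fun a ha => ⟨_, h' a ha, by simp [mul_assoc]⟩

namespace Commute

variable {G : Type*} [Group G] {a b : G}

def zpowersPairHom (h : Commute a b) : Multiplicative (ℤ × ℤ) →* G :=
  ((zpowersHom G a).noncommCoprod (zpowersHom G b) fun _ _ => h.zpow_zpow _ _).comp
    (MulEquiv.prodMultiplicative ℤ ℤ).toMonoidHom

lemma zpowersPairHom_apply (h : Commute a b) (p : Multiplicative (ℤ × ℤ)) :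
    h.zpowersPairHom p = a ^ p.toAdd.1 * b ^ p.toAdd.2 :=
  rfl

lemma range_zpowersPairHom (h : Commute a b) :
    h.zpowersPairHom.range = Subgroup.closure {a, b} := by
  refine le_antisymm ?_ ?_
  · rintro _ ⟨p, rfl⟩
    rw [zpowersPairHom_apply]
    exact mul_mem (zpow_mem (Subgroup.subset_closure (by simp)) _)
      (zpow_mem (Subgroup.subset_closure (by simp)) _)
  · rw [Subgroup.closure_le, Set.insert_subset_iff, Set.singleton_subset_iff]
    exact ⟨⟨Multiplicative.ofAdd (1, 0), by simp [zpowersPairHom_apply]⟩,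
      ⟨Multiplicative.ofAdd (0, 1), by simp [zpowersPairHom_apply]⟩⟩

end Commute

def translationMatrixHom : Multiplicative (ℤ × ℤ) →* Matrix (Fin 3) (Fin 3) ℤ where
  toFun p := !![1, 0, p.toAdd.1; 0, 1, p.toAdd.2; 0, 0, 1]
  map_one' := by simp [Matrix.one_fin_three]
  map_mul' p q := by simp [add_comm]

def translationHom : Multiplicative (ℤ × ℤ) →* (Matrix (Fin 3) (Fin 3) ℤ)ˣ :=
  translationMatrixHom.toHomUnits

lemma translationHom_injective : Function.Injective translationHom := by
  intro p q hpq
  have h := congrArg Units.val hpq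
  have h₀ := congrFun (congrFun h 0) 2
  have h₁ := congrFun (congrFun h 1) 2
  simp [translationHom, translationMatrixHom] at h₀ h₁
  exact Prod.ext h₀ h₁

lemma P6x_pow_six : P6x ^ 6 = 1 :=
  (map_pow (PresentedGroup.mk relsP6) _ 6).symm.trans (PresentedGroup.one_of_mem (by simp [relsP6]))

lemma P6y_pow_three : P6y ^ 3 = 1 :=
  (map_pow (PresentedGroup.mk relsP6) _ 3).symm.trans (PresentedGroup.one_of_mem (by simp [relsP6]))

lemma P6x_mul_P6y_pow_two : (P6x * P6y) ^ 2 = 1 :=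
  (map_pow (PresentedGroup.mk relsP6) (FreeGroup.of 0 * FreeGroup.of 1) 2).symm.trans
    (PresentedGroup.one_of_mem (by simp [relsP6]))

lemma P6x_mul_P6y_mul_P6x : P6x * P6y * P6x = P6y⁻¹ :=
  eq_inv_of_mul_eq_one_left (by rw [← P6x_mul_P6y_pow_two, pow_two, mul_assoc])

lemma P6y_mul_P6x_mul_P6y : P6y * P6x * P6y = P6x⁻¹ :=
  eq_inv_of_mul_eq_one_left <| by
    rw [show P6y * P6x * P6y * P6x = P6x⁻¹ * (P6x * P6y) ^ 2 * P6x by rw [pow_two]; group,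
      P6x_mul_P6y_pow_two]
    group

lemma conj_P6x_P6t1 : MulAut.conj P6x P6t1 = P6t2 := by
  calc P6x * (P6y * (P6x * P6x)⁻¹) * P6x⁻¹
      = P6x * P6y * P6x * (P6x ^ 6)⁻¹ * P6x * P6x := by group
    _ = P6t2 := by rw [P6x_mul_P6y_mul_P6x, P6x_pow_six, inv_one, mul_one, P6t2, mul_assoc]

lemma conj_P6x_P6t2 : MulAut.conj P6x P6t2 = P6t2 * P6t1⁻¹ := by
  calc P6x * (P6y⁻¹ * (P6x * P6x)) * P6x⁻¹
      = P6y⁻¹ * (P6y * P6x * P6y) * (P6y ^ 3)⁻¹ * (P6y * P6x * P6y) * P6y⁻¹ := by group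
    _ = P6y⁻¹ * P6x ^ 4 * (P6x ^ 6)⁻¹ * P6y⁻¹ := by
      rw [P6y_mul_P6x_mul_P6y, P6y_pow_three]; group
    _ = P6t2 * P6t1⁻¹ := by rw [P6x_pow_six, P6t2, P6t1]; group

lemma conj_P6x_pow_three_P6t1 : MulAut.conj (P6x ^ 3) P6t1 = P6t1⁻¹ := by
  calc P6x ^ 3 * (P6y * (P6x * P6x)⁻¹) * (P6x ^ 3)⁻¹
      = P6x ^ 2 * (P6x * P6y * P6x) * (P6x ^ 6)⁻¹ := by group
    _ = P6t1⁻¹ := by rw [P6x_mul_P6y_mul_P6x, P6x_pow_six, P6t1]; group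

lemma commute_P6t1_P6t2 : Commute P6t1 P6t2 := by
  have h : MulAut.conj (P6x ^ 3) P6t1 = P6t2 * P6t1⁻¹ * P6t2⁻¹ := by
    rw [pow_succ, map_mul, MulAut.mul_apply, conj_P6x_P6t1, pow_two, map_mul, MulAut.mul_apply,
      conj_P6x_P6t2, map_mul, map_inv, conj_P6x_P6t2, conj_P6x_P6t1]
  rw [conj_P6x_pow_three_P6t1] at h
  exact (Commute.inv_right_iff.mp (mul_inv_eq_iff_eq_mul.mp h.symm)).symm

lemma P6y_eq_P6t1_mul : P6y = P6t1 * P6x * P6x := by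
  rw [P6t1]; group

lemma conj_P6x_inv_P6t1 : MulAut.conj P6x⁻¹ P6t1 = P6t2⁻¹ * P6t1 := by
  rw [map_inv, MulAut.inv_def, MulEquiv.symm_apply_eq, map_mul, map_inv, conj_P6x_P6t1,
    conj_P6x_P6t2]
  group

lemma conj_P6x_inv_P6t2 : MulAut.conj P6x⁻¹ P6t2 = P6t1 := by
  rw [← conj_P6x_P6t1, map_inv, MulAut.inv_apply_self]

lemma closure_P6t1_P6t2_normal : (Subgroup.closure {P6t1, P6t2}).Normal := by
  set H := Subgroup.closure ({P6t1, P6t2} : Set P6)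
  have ht1 : P6t1 ∈ H := Subgroup.subset_closure (by simp)
  have ht2 : P6t2 ∈ H := Subgroup.subset_closure (by simp)
  have hx : P6x ∈ Subgroup.normalizer (H : Set P6) := by
    refine Subgroup.mem_normalizer_closure_of_conj_mem ?_ ?_ <;>
      simp only [Set.forall_mem_insert, Set.mem_singleton_iff, forall_eq]
    · rw [conj_P6x_P6t1, conj_P6x_P6t2]
      exact ⟨ht2, mul_mem ht2 (inv_mem ht1)⟩
    · rw [conj_P6x_inv_P6t1, conj_P6x_inv_P6t2]
      exact ⟨mul_mem (inv_mem ht2) ht1, ht1⟩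
  rw [← Subgroup.normalizer_eq_top_iff, eq_top_iff, ← PresentedGroup.closure_range_of,
    Subgroup.closure_le]
  rintro _ ⟨i, rfl⟩
  fin_cases i
  · exact hx
  · show P6y ∈ _
    rw [P6y_eq_P6t1_mul]
    exact mul_mem (mul_mem (Subgroup.le_normalizer ht1) hx) hx

-- In the basis `(t₁, t₂)` of the hexagonal lattice, `x` is the rotation by 60° and `y = t₁ x²` the
-- rotation by 120° followed by the translation by `(1, 0)`.
def affineGen : Fin 2 → (Matrix (Fin 3) (Fin 3) ℤ)ˣ :=
  ![⟨!![0, -1, 0; 1, 1, 0; 0, 0, 1], !![1, 1, 0; -1, 0, 0; 0, 0, 1], by decide, by decide⟩,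
    ⟨!![-1, -1, 1; 1, 0, 0; 0, 0, 1], !![0, 1, 0; -1, -1, 1; 0, 0, 1], by decide, by decide⟩]

lemma affineGen_rels : ∀ r ∈ relsP6, FreeGroup.lift affineGen r = 1 := by
  simp only [relsP6, Set.forall_mem_insert, Set.mem_singleton_iff, forall_eq, map_pow, map_mul,
    FreeGroup.lift_apply_of]
  refine ⟨?_, ?_, ?_⟩ <;> ext1 <;> decide

def affineRep : P6 →* (Matrix (Fin 3) (Fin 3) ℤ)ˣ :=
  PresentedGroup.toGroup affineGen_rels

lemma affineRep_P6t1 : affineRep P6t1 = translationHom (.ofAdd (1, 0)) := by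
  simp only [P6t1, P6x, P6y, affineRep, map_mul, map_inv, PresentedGroup.toGroup.of]
  ext1
  decide

lemma affineRep_P6t2 : affineRep P6t2 = translationHom (.ofAdd (0, 1)) := by
  simp only [P6t2, P6x, P6y, affineRep, map_mul, map_inv, PresentedGroup.toGroup.of]
  ext1
  decide

lemma affineRep_comp_zpowersPairHom :
    affineRep.comp commute_P6t1_P6t2.zpowersPairHom = translationHom := by
  refine MonoidHom.ext fun p => ?_
  rw [MonoidHom.comp_apply, Commute.zpowersPairHom_apply, map_mul, map_zpow, map_zpow,
    affineRep_P6t1, affineRep_P6t2, ← map_zpow translationHom, ← map_zpow translationHom,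
    ← map_mul]
  congr 1
  simp [← ofAdd_zsmul, ← ofAdd_add]

lemma zpowersPairHom_P6t1_P6t2_injective :
    Function.Injective commute_P6t1_P6t2.zpowersPairHom :=
  .of_comp (f := affineRep) <| by
    rw [← MonoidHom.coe_comp, affineRep_comp_zpowersPairHom]
    exact translationHom_injective

/-- In `P₆`, the translations `t₁ = y x⁻²` and `t₂ = y⁻¹ x²` commute, generate a
normal subgroup, and this subgroup is free abelian of rank 2. -/
theorem stmt11 :
    Commute P6t1 P6t2 ∧
    (Subgroup.closure ({P6t1, P6t2} : Set P6)).Normal ∧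
    Nonempty ((Subgroup.closure ({P6t1, P6t2} : Set P6)) ≃* Multiplicative (ℤ × ℤ)) :=
  ⟨commute_P6t1_P6t2, closure_P6t1_P6t2_normal,
    ⟨(MulEquiv.subgroupCongr commute_P6t1_P6t2.range_zpowersPairHom).symm.trans
      (MonoidHom.ofInjective zpowersPairHom_P6t1_P6t2_injective).symm⟩⟩
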